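/- Let u be a v-minimal word of a synchronizing automaton 𝒜, i ∈ supp(u), and let w be a word that u-represents g ∈ ℐ_i. Then for any words a, b ∈ Σ*, the word awb u-represents θ_i(a)·g·θ_i(b). -/

import Mathlib

open scoped BigOperators

set_option synthInstance.maxHeartbeats 1000000
set_option maxHeartbeats 1000000

noncomputable section

/-- Action of a word on a state: `q · u`. -/
def actW {Q A : Type*} (δ : Q → A → Q) (q : Q) (u : List A) : Q :=
  u.foldl δ q

/-- The image `Q · u` of the full state set under a word. -/
def imageSet {Q A : Type*} [Fintype Q] [DecidableEq Q] (δ : Q → A → Q) (u : List A) :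
    Finset Q :=
  Finset.image (fun q => actW δ q u) Finset.univ

/-- The rank `rk(u) = |Q · u|` of a word. -/
def wordRank {Q A : Type*} [Fintype Q] [DecidableEq Q] (δ : Q → A → Q) (u : List A) : ℕ :=
  (imageSet δ u).card

/-- A word is reset (synchronizing) if `|Q · u| = 1`. -/
def IsReset {Q A : Type*} [Fintype Q] [DecidableEq Q] (δ : Q → A → Q) (u : List A) : Prop :=
  wordRank δ u = 1

/-- The automaton is synchronizing if it admits a reset word. -/
def IsSynchronizing {Q A : Type*} [Fintype Q] [DecidableEq Q] (δ : Q → A → Q) : Prop :=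
  ∃ u : List A, IsReset δ u

/-- `Syn(𝒜)`, the set of reset words. -/
def SynWords {Q A : Type*} [Fintype Q] [DecidableEq Q] (δ : Q → A → Q) : Set (List A) :=
  {u | IsReset δ u}

/-- The hyperplane `w⊥ = {v ∈ ℂQ : ∑ q, v q = 0}`. -/
def Wperp (Q : Type*) [Fintype Q] : Submodule ℂ (Q → ℂ) :=
  LinearMap.ker (∑ q : Q, (LinearMap.proj q : (Q → ℂ) →ₗ[ℂ] ℂ))

theorem mem_Wperp {Q : Type*} [Fintype Q] (v : Q → ℂ) :
    v ∈ Wperp Q ↔ ∑ q : Q, v q = 0 := by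
  simp [Wperp, LinearMap.mem_ker, LinearMap.sum_apply]

/-- The (right) action of a word on row vectors `v ↦ v·π(u)`. -/
def piLin {Q A : Type*} [Fintype Q] [DecidableEq Q] (δ : Q → A → Q) (u : List A) :
    (Q → ℂ) →ₗ[ℂ] (Q → ℂ) where
  toFun v := fun p => ∑ q ∈ Finset.univ.filter (fun q => actW δ q u = p), v q
  map_add' := by
    intro a b; funext p; simp [Finset.sum_add_distrib]
  map_smul' := by
    intro c v; funext p; simp [Finset.mul_sum]

theorem piLin_mem {Q A : Type*} [Fintype Q] [DecidableEq Q] (δ : Q → A → Q) (u : List A) :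
    ∀ v ∈ Wperp Q, piLin δ u v ∈ Wperp Q := by
  intro v hv
  rw [mem_Wperp] at hv ⊢
  have h := Finset.sum_fiberwise (Finset.univ : Finset Q) (fun q => actW δ q u) v
  calc ∑ p : Q, piLin δ u v p
      = ∑ p : Q, ∑ q ∈ Finset.univ.filter (fun q => actW δ q u = p), v q := rfl
    _ = ∑ q : Q, v q := h
    _ = 0 := hv

/-- The endomorphism of `w⊥` induced by a word. -/
def rhoEnd {Q A : Type*} [Fintype Q] [DecidableEq Q] (δ : Q → A → Q) (u : List A) :
    Module.End ℂ (Wperp Q) :=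
  (piLin δ u).restrict (piLin_mem δ u)

/-- The representation `ρ : Σ* → End(w⊥)`; we record it in the multiplicative opposite so
that `ρ (u ++ v) = ρ u * ρ v` (the paper's right-action convention). -/
def rho {Q A : Type*} [Fintype Q] [DecidableEq Q] (δ : Q → A → Q) (u : List A) :
    (Module.End ℂ (Wperp Q))ᵐᵒᵖ :=
  MulOpposite.op (rhoEnd δ u)

/-- `ℛ`, the ℂ-subalgebra generated by `ρ(Σ*)`. -/
def Ralg {Q A : Type*} [Fintype Q] [DecidableEq Q] (δ : Q → A → Q) :
    Subalgebra ℂ (Module.End ℂ (Wperp Q))ᵐᵒᵖ :=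
  Algebra.adjoin ℂ (Set.range (rho δ))

/-- `ρ(u)` seen as an element of `ℛ`. -/
def rhoR {Q A : Type*} [Fintype Q] [DecidableEq Q] (δ : Q → A → Q) (u : List A) :
    Ralg δ :=
  ⟨rho δ u, Algebra.subset_adjoin (Set.mem_range_self u)⟩

/-- The Jacobson radical `Rad(ℛ)` of `ℛ`, realised as a subset of the ambient algebra via
the standard characterisation: `x ∈ Rad(ℛ)` iff `x ∈ ℛ` and for every `y ∈ ℛ` the element
`1 - y * x` is left-invertible in `ℛ`. -/
def RadSet {Q A : Type*} [Fintype Q] [DecidableEq Q] (δ : Q → A → Q) :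
    Set (Module.End ℂ (Wperp Q))ᵐᵒᵖ :=
  {x | x ∈ Ralg δ ∧ ∀ y ∈ Ralg δ, ∃ z ∈ Ralg δ, z * (1 - y * x) = 1}

/-- `Rad(𝒜)`: the set of radical words, i.e. words `u` with `ρ(u) ∈ Rad(ℛ)`. -/
def RadWords {Q A : Type*} [Fintype Q] [DecidableEq Q] (δ : Q → A → Q) : Set (List A) :=
  {u | rho δ u ∈ RadSet δ}

/-- The automaton is semisimple when `Rad(𝒜) = Syn(𝒜)`. -/
def IsSemisimple {Q A : Type*} [Fintype Q] [DecidableEq Q] (δ : Q → A → Q) : Prop :=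
  RadWords δ = SynWords δ

/-- The `t`-packing number `D(t,r,n)`: the maximum size of a family of `r`-subsets of an
`n`-set in which every `t`-subset is contained in at most one member. -/
def packingNumber (t r n : ℕ) : ℕ :=
  sSup {m | ∃ F : Finset (Finset (Fin n)), F.card = m ∧ (∀ S ∈ F, S.card = r) ∧
    ∀ T : Finset (Fin n), T.card = t → (F.filter fun S => T ⊆ S).card ≤ 1}

/-- The former-rank `Fr(𝒜)`: the least rank of a non-reset word. -/
def formerRank {Q A : Type*} [Fintype Q] [DecidableEq Q] (δ : Q → A → Q) : ℕ :=
  sInf {m | ∃ u : List A, ¬ IsReset δ u ∧ wordRank δ u = m}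

/-- `Fs(𝒜)`: the set of former-synchronizing words. -/
def Fs {Q A : Type*} [Fintype Q] [DecidableEq Q] (δ : Q → A → Q) : Set (List A) :=
  {u | wordRank δ u = formerRank δ}

/-- `θ_i(u)`: the image of `ρ(u)` in the `i`-th Wedderburn–Artin matrix component, where
`e : ℛ → ∏ i, M_{n_i}(ℂ)` is the quotient map `ψ` followed by the fixed isomorphism. -/
def theta {Q A : Type*} [Fintype Q] [DecidableEq Q] (δ : Q → A → Q) {k : ℕ} {nn : Fin k → ℕ}
    (e : Ralg δ →ₐ[ℂ] ∀ i : Fin k, Matrix (Fin (nn i)) (Fin (nn i)) ℂ)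
    (u : List A) (i : Fin k) : Matrix (Fin (nn i)) (Fin (nn i)) ℂ :=
  e (rhoR δ u) i

/-- `supp(v) = {i : θ_i(v) ≠ 0}`. -/
def suppW {Q A : Type*} [Fintype Q] [DecidableEq Q] (δ : Q → A → Q) {k : ℕ} {nn : Fin k → ℕ}
    (e : Ralg δ →ₐ[ℂ] ∀ i : Fin k, Matrix (Fin (nn i)) (Fin (nn i)) ℂ)
    (v : List A) : Set (Fin k) :=
  {i | theta δ e v i ≠ 0}

/-- `u ∈ Σ* v Σ*`, i.e. `v` is a factor of `u`. -/
def InFactor {A : Type*} (v u : List A) : Prop :=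
  ∃ a b : List A, u = a ++ v ++ b

/-- `u` is a `v`-minimal word: `u ∈ Σ*vΣ*`, `supp(u)` is nonempty, and `supp(u)` is minimal
among the nonempty supports of words in `Σ*vΣ*`. -/
def IsVMinimal {Q A : Type*} [Fintype Q] [DecidableEq Q] (δ : Q → A → Q) {k : ℕ}
    {nn : Fin k → ℕ}
    (e : Ralg δ →ₐ[ℂ] ∀ i : Fin k, Matrix (Fin (nn i)) (Fin (nn i)) ℂ)
    (v u : List A) : Prop :=
  InFactor v u ∧ (suppW δ e u).Nonempty ∧
    ∀ z : List A, InFactor v z → suppW δ e z ⊆ suppW δ e u →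
      suppW δ e z = ∅ ∨ suppW δ e z = suppW δ e u

/-- The `i`-th factor monoid `ℳ_i = θ_i(Σ*)`. -/
def factorMonoid {Q A : Type*} [Fintype Q] [DecidableEq Q] (δ : Q → A → Q) {k : ℕ}
    {nn : Fin k → ℕ}
    (e : Ralg δ →ₐ[ℂ] ∀ i : Fin k, Matrix (Fin (nn i)) (Fin (nn i)) ℂ)
    (i : Fin k) : Set (Matrix (Fin (nn i)) (Fin (nn i)) ℂ) :=
  Set.range fun u : List A => theta δ e u i

/-- A two-sided ideal of the (sub)monoid `M`. -/
def IsSetIdeal {X : Type*} [Mul X] (M I : Set X) : Prop :=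
  I ⊆ M ∧ ∀ a ∈ M, ∀ x ∈ I, a * x ∈ I ∧ x * a ∈ I

/-- `I` is a `0`-minimal (two-sided) ideal of the monoid `M`. -/
def IsZeroMinimalIdeal {X : Type*} [Mul X] [Zero X] (M I : Set X) : Prop :=
  IsSetIdeal M I ∧ (0 : X) ∈ I ∧ I ≠ {0} ∧
    ∀ J : Set X, IsSetIdeal M J → (0 : X) ∈ J → J ⊆ I → J ≠ {0} → J = I

/-- `Rnk_i(g) = min {rk(u) : θ_i(u) = g}`. -/
def rnkElt {Q A : Type*} [Fintype Q] [DecidableEq Q] (δ : Q → A → Q) {k : ℕ}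
    {nn : Fin k → ℕ}
    (e : Ralg δ →ₐ[ℂ] ∀ i : Fin k, Matrix (Fin (nn i)) (Fin (nn i)) ℂ)
    (i : Fin k) (g : Matrix (Fin (nn i)) (Fin (nn i)) ℂ) : ℕ :=
  sInf {m | ∃ u : List A, theta δ e u i = g ∧ wordRank δ u = m}

/-- `Rnk(ℐ_i) = min {Rnk_i(g) : g ∈ ℐ_i ∖ {0}}`. -/
def rnkIdeal {Q A : Type*} [Fintype Q] [DecidableEq Q] (δ : Q → A → Q) {k : ℕ}
    {nn : Fin k → ℕ}
    (e : Ralg δ →ₐ[ℂ] ∀ i : Fin k, Matrix (Fin (nn i)) (Fin (nn i)) ℂ)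
    (i : Fin k) (I : Set (Matrix (Fin (nn i)) (Fin (nn i)) ℂ)) : ℕ :=
  sInf {m | ∃ g ∈ I, g ≠ 0 ∧ rnkElt δ e i g = m}

/-- `w` `u`-represents `g`: `w ∈ Σ*uΣ*`, `θ_i(w) = g`, and either `g = 0` or `rk(w)` is
minimum among all words with the first two properties. -/
def URepresents {Q A : Type*} [Fintype Q] [DecidableEq Q] (δ : Q → A → Q) {k : ℕ}
    {nn : Fin k → ℕ}
    (e : Ralg δ →ₐ[ℂ] ∀ i : Fin k, Matrix (Fin (nn i)) (Fin (nn i)) ℂ)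
    (u : List A) (i : Fin k) (w : List A) (g : Matrix (Fin (nn i)) (Fin (nn i)) ℂ) : Prop :=
  InFactor u w ∧ theta δ e w i = g ∧
    (g = 0 ∨ ∀ w' : List A, InFactor u w' → theta δ e w' i = g → wordRank δ w ≤ wordRank δ w')

/-- The relation `σ_i` on `ℐ_i`. -/
def sigmaRel {Q A : Type*} [Fintype Q] [DecidableEq Q] (δ : Q → A → Q) {k : ℕ}
    {nn : Fin k → ℕ}
    (e : Ralg δ →ₐ[ℂ] ∀ i : Fin k, Matrix (Fin (nn i)) (Fin (nn i)) ℂ)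
    (i : Fin k) (u : List A)
    (g f : Matrix (Fin (nn i)) (Fin (nn i)) ℂ) : Prop :=
  g = f ∨ ∃ w₁ w₂ : List A, URepresents δ e u i w₁ g ∧ URepresents δ e u i w₂ f ∧
    1 < (imageSet δ w₁ ∩ imageSet δ w₂).card

/-- `T ⊆ [1,k]` is a core. -/
def IsCore {Q A : Type*} [Fintype Q] [DecidableEq Q] (δ : Q → A → Q) {k : ℕ}
    {nn : Fin k → ℕ}
    (e : Ralg δ →ₐ[ℂ] ∀ i : Fin k, Matrix (Fin (nn i)) (Fin (nn i)) ℂ)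
    (T : Set (Fin k)) : Prop :=
  ∀ x : List A, (∀ i ∈ T, theta δ e x i = 0) → ∀ i : Fin k, theta δ e x i = 0

/-- A minimal core. -/
def IsMinimalCore {Q A : Type*} [Fintype Q] [DecidableEq Q] (δ : Q → A → Q) {k : ℕ}
    {nn : Fin k → ℕ}
    (e : Ralg δ →ₐ[ℂ] ∀ i : Fin k, Matrix (Fin (nn i)) (Fin (nn i)) ℂ)
    (T : Set (Fin k)) : Prop :=
  IsCore δ e T ∧ ∀ T' : Set (Fin k), T' ⊆ T → IsCore δ e T' → T' = T

/-- An automaton congruence. -/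
def IsCongruence {Q A : Type*} (δ : Q → A → Q) (σ : Q → Q → Prop) : Prop :=
  Equivalence σ ∧ ∀ q p : Q, σ q p → ∀ u : List A, σ (actW δ q u) (actW δ p u)

/-- A simple automaton: the only congruences are the identity and the universal relation. -/
def IsSimple {Q A : Type*} (δ : Q → A → Q) : Prop :=
  ∀ σ : Q → Q → Prop, IsCongruence δ σ → σ = Eq ∨ σ = fun _ _ => True

/-! If `h = θ_i(a) g θ_i(b)` is nonzero, it lies in the `0`-minimal ideal `ℐ_i`, so the ideal
`{0} ∪ ℳ_i h ℳ_i` it generates is all of `ℐ_i`; hence `g = θ_i(c) h θ_i(d)` for some words `c, d`.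
A word `w' ∈ Σ*uΣ*` with `θ_i(w') = h` then gives the word `c w' d ∈ Σ*uΣ*` with image `g`, and
since the rank does not increase under left or right multiplication,
`rk(a w b) ≤ rk(w) ≤ rk(c w' d) ≤ rk(w')`. -/

theorem IsSetIdeal.mul_mul_mem {X : Type*} [Mul X] {M I : Set X} (hI : IsSetIdeal M I)
    {a b x : X} (ha : a ∈ M) (hb : b ∈ M) (hx : x ∈ I) : a * x * b ∈ I :=
  (hI.2 b hb _ (hI.2 a ha x hx).1).2

theorem IsZeroMinimalIdeal.eq_zero_or_exists_mul_mul {X : Type*} [MonoidWithZero X]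
    {M I : Set X} (hM_one : 1 ∈ M) (hM_mul : ∀ a ∈ M, ∀ b ∈ M, a * b ∈ M)
    (hI : IsZeroMinimalIdeal M I) {g h : X} (hg : g ∈ I) (hh : h ∈ I) (h0 : h ≠ 0) :
    g = 0 ∨ ∃ m ∈ M, ∃ m' ∈ M, g = m * h * m' := by
  obtain ⟨hI_ideal, hI_zero, -, hI_min⟩ := hI
  set J : Set X := {x | x = 0 ∨ ∃ m ∈ M, ∃ m' ∈ M, x = m * h * m'}
  have hJ_ideal : IsSetIdeal M J := by
    refine ⟨?_, ?_⟩
    · rintro x (rfl | ⟨m, hm, m', hm', rfl⟩)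
      · exact hI_ideal.1 hI_zero
      · exact hM_mul _ (hM_mul m hm h (hI_ideal.1 hh)) m' hm'
    · rintro a ha x (rfl | ⟨m, hm, m', hm', rfl⟩)
      · simp [J]
      · exact ⟨Or.inr ⟨a * m, hM_mul a ha m hm, m', hm', by simp only [mul_assoc]⟩,
          Or.inr ⟨m, hm, m' * a, hM_mul m' hm' a ha, by simp only [mul_assoc]⟩⟩
  have hJ_sub : J ⊆ I := by
    rintro x (rfl | ⟨m, hm, m', hm', rfl⟩)
    · exact hI_zero
    · exact hI_ideal.mul_mul_mem hm hm' hh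
  have hhJ : h ∈ J := Or.inr ⟨1, hM_one, 1, hM_one, by simp⟩
  have hJ_ne : J ≠ {0} := fun hJ => h0 (Set.mem_singleton_iff.1 (hJ ▸ hhJ))
  rw [← hI_min J hJ_ideal (Or.inl rfl) hJ_sub hJ_ne] at hg
  exact hg

theorem InFactor.append_append {A : Type*} {u w : List A} (h : InFactor u w) (a b : List A) :
    InFactor u (a ++ w ++ b) := by
  obtain ⟨c, d, rfl⟩ := h
  exact ⟨a ++ c, d ++ b, by simp⟩

section Automaton

variable {Q A : Type*} (δ : Q → A → Q)

theorem actW_append (q : Q) (x y : List A) : actW δ q (x ++ y) = actW δ (actW δ q x) y :=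
  List.foldl_append

variable [Fintype Q] [DecidableEq Q]

theorem imageSet_append (x y : List A) :
    imageSet δ (x ++ y) = (imageSet δ x).image fun q => actW δ q y := by
  ext p
  simp [imageSet, actW_append]

theorem wordRank_append_le_left (x y : List A) : wordRank δ (x ++ y) ≤ wordRank δ x := by
  rw [wordRank, imageSet_append]
  exact Finset.card_image_le

theorem wordRank_append_le_right (x y : List A) : wordRank δ (x ++ y) ≤ wordRank δ y := by
  rw [wordRank, imageSet_append, imageSet, Finset.image_image]
  exact Finset.card_le_card fun p => by
    simp only [Finset.mem_image, Finset.mem_univ, true_and, Function.comp_apply, imageSet]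
    exact fun ⟨q, hq⟩ => ⟨_, hq⟩

theorem wordRank_append_append_le (a w b : List A) : wordRank δ (a ++ w ++ b) ≤ wordRank δ w :=
  (wordRank_append_le_left δ (a ++ w) b).trans (wordRank_append_le_right δ a w)

theorem piLin_append (x y : List A) : piLin δ (x ++ y) = piLin δ y ∘ₗ piLin δ x := by
  refine LinearMap.ext fun v => funext fun p => ?_
  show ∑ q ∈ Finset.univ.filter (fun q => actW δ q (x ++ y) = p), v q
      = ∑ r ∈ Finset.univ.filter (fun r => actW δ r y = p),
          ∑ q ∈ Finset.univ.filter (fun q => actW δ q x = r), v q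
  rw [Finset.sum_fiberwise_eq_sum_filter]
  simp only [actW_append, Finset.mem_filter, Finset.mem_univ, true_and]

theorem piLin_nil : piLin δ ([] : List A) = LinearMap.id := by
  refine LinearMap.ext fun v => funext fun p => ?_
  show ∑ q ∈ Finset.univ.filter (fun q => q = p), v q = v p
  simp [Finset.filter_eq']

theorem rhoR_append (x y : List A) : rhoR δ (x ++ y) = rhoR δ x * rhoR δ y := by
  refine Subtype.ext (MulOpposite.unop_injective ?_)
  ext v p
  simp [rhoR, rho, rhoEnd, piLin_append]

theorem rhoR_nil : rhoR δ ([] : List A) = 1 := by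
  refine Subtype.ext (MulOpposite.unop_injective ?_)
  ext v p
  simp [rhoR, rho, rhoEnd, piLin_nil]

variable {k : ℕ} {nn : Fin k → ℕ}
  (e : Ralg δ →ₐ[ℂ] ∀ i : Fin k, Matrix (Fin (nn i)) (Fin (nn i)) ℂ)

theorem theta_append (x y : List A) (i : Fin k) :
    theta δ e (x ++ y) i = theta δ e x i * theta δ e y i := by
  simp [theta, rhoR_append]

theorem theta_append_append (a w b : List A) (i : Fin k) :
    theta δ e (a ++ w ++ b) i = theta δ e a i * theta δ e w i * theta δ e b i := by
  rw [theta_append, theta_append]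

theorem one_mem_factorMonoid (i : Fin k) : 1 ∈ factorMonoid δ e i :=
  ⟨[], by simp [theta, rhoR_nil]⟩

theorem mul_mem_factorMonoid (i : Fin k) :
    ∀ m ∈ factorMonoid δ e i, ∀ m' ∈ factorMonoid δ e i, m * m' ∈ factorMonoid δ e i := by
  rintro _ ⟨x, rfl⟩ _ ⟨y, rfl⟩
  exact ⟨x ++ y, theta_append δ e x y i⟩

end Automaton

theorem stmt15_general {Q A : Type*} [Fintype Q] [DecidableEq Q] (δ : Q → A → Q)
    {k : ℕ} {nn : Fin k → ℕ}
    (e : Ralg δ →ₐ[ℂ] ∀ i : Fin k, Matrix (Fin (nn i)) (Fin (nn i)) ℂ)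
    (Ii : ∀ i : Fin k, Set (Matrix (Fin (nn i)) (Fin (nn i)) ℂ))
    (hIi : ∀ i : Fin k, IsZeroMinimalIdeal (factorMonoid δ e i) (Ii i))
    (u : List A) (i : Fin k)
    (g : Matrix (Fin (nn i)) (Fin (nn i)) ℂ) (hg : g ∈ Ii i)
    (w : List A) (hw : URepresents δ e u i w g) (a b : List A) :
    URepresents δ e u i (a ++ w ++ b) (theta δ e a i * g * theta δ e b i) := by
  obtain ⟨hw_fac, rfl, hw_min⟩ := hw
  refine ⟨hw_fac.append_append a b, theta_append_append δ e a w b i, ?_⟩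
  rcases eq_or_ne (theta δ e a i * theta δ e w i * theta δ e b i) 0 with h0 | h0
  · exact Or.inl h0
  have hw0 : theta δ e w i ≠ 0 := fun hw0 => h0 (by simp [hw0])
  have hh : theta δ e a i * theta δ e w i * theta δ e b i ∈ Ii i :=
    (hIi i).1.mul_mul_mem ⟨a, rfl⟩ ⟨b, rfl⟩ hg
  obtain hw0' | ⟨_, ⟨c, rfl⟩, _, ⟨d, rfl⟩, hcd⟩ :=
    (hIi i).eq_zero_or_exists_mul_mul (one_mem_factorMonoid δ e i)
      (mul_mem_factorMonoid δ e i) hg hh h0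
  · exact absurd hw0' hw0
  refine Or.inr fun w' hw'_fac hw'_theta => ?_
  calc wordRank δ (a ++ w ++ b) ≤ wordRank δ w := wordRank_append_append_le δ a w b
    _ ≤ wordRank δ (c ++ w' ++ d) := (hw_min.resolve_left hw0) _ (hw'_fac.append_append c d)
        (by rw [theta_append_append, hw'_theta]; exact hcd.symm)
    _ ≤ wordRank δ w' := wordRank_append_append_le δ c w' d

theorem stmt15 {Q A : Type*} [Fintype Q] [DecidableEq Q] (δ : Q → A → Q)
    {k : ℕ} {nn : Fin k → ℕ}
    (e : Ralg δ →ₐ[ℂ] ∀ i : Fin k, Matrix (Fin (nn i)) (Fin (nn i)) ℂ)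
    (he_surj : Function.Surjective e)
    (he_ker : ∀ x : Ralg δ, e x = 0 ↔ (x : (Module.End ℂ (Wperp Q))ᵐᵒᵖ) ∈ RadSet δ)
    (Ii : ∀ i : Fin k, Set (Matrix (Fin (nn i)) (Fin (nn i)) ℂ))
    (hIi : ∀ i : Fin k, IsZeroMinimalIdeal (factorMonoid δ e i) (Ii i))
    (hIuniq : ∀ (i : Fin k) (J : Set (Matrix (Fin (nn i)) (Fin (nn i)) ℂ)),
      IsZeroMinimalIdeal (factorMonoid δ e i) J → J = Ii i)
    (hsync : IsSynchronizing δ)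
    (v u : List A) (hu : IsVMinimal δ e v u) (i : Fin k) (hi : i ∈ suppW δ e u)
    (g : Matrix (Fin (nn i)) (Fin (nn i)) ℂ) (hg : g ∈ Ii i)
    (w : List A) (hw : URepresents δ e u i w g) (a b : List A) :
    URepresents δ e u i (a ++ w ++ b) (theta δ e a i * g * theta δ e b i) :=
  stmt15_general δ e Ii hIi u i g hg w hw a b
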